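/- The complete generating function of stack polygons, S(x,y,q) = Σ x^{width} y^{height} q^{area}, equals Σ_{n≥1} x y^n q^n / ((xq)_{n-1} (xq)_n), where (xq)_n = (1-xq)(1-xq^2)···(1-xq^n). -/

import Mathlib

/-!
Cutting a stack of height `n` at its first column of height `n` leaves, on the left, a weakly
increasing sequence of heights `< n` and, on the right, a weakly decreasing sequence of heights
`≤ n`. Read as partitions (the left one reversed), these are arbitrary partitions with parts at
most `n - 1` and at most `n`, counted by number of parts and size by `1/(xq)_{n-1}` and
`1/(xq)_n`, while the cut column contributes `x yⁿ qⁿ`. The partition count comes from the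
recurrence `P_{k+1} = P_k + x q^{k+1} P_{k+1}`: a partition with parts `≤ k + 1` either has no
part `k + 1`, or is one with an extra part `k + 1` in front.
-/

/-- A stack polygon: a nonempty unimodal (weakly increasing then weakly decreasing)
list of positive column heights. Width = length, height = max, area = sum. -/
def IsStack (l : List ℕ) : Prop :=
  l ≠ [] ∧ (∀ x ∈ l, 0 < x) ∧
    ∃ l₁ l₂ : List ℕ, l = l₁ ++ l₂ ∧ l₁.Pairwise (· ≤ ·) ∧ l₂.Pairwise (· ≥ ·)

/-- The complete generating function `S(x,y,q) = Σ x^width y^height q^area` of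
stack polygons, with `x = X 0`, `y = X 1`, `q = X 2`. -/
noncomputable def stackGF : MvPowerSeries (Fin 3) ℚ :=
  fun d => (Set.ncard {l : List ℕ | IsStack l ∧ l.length = d 0 ∧
    l.foldr max 0 = d 1 ∧ l.sum = d 2} : ℚ)

/-- The part of a series in which the exponent of `y = X 1` equals `n`. -/
noncomputable def yslice (n : ℕ) (f : MvPowerSeries (Fin 3) ℚ) : MvPowerSeries (Fin 3) ℚ :=
  fun d => if d 1 = n then f d else 0

open MvPowerSeries Finset.HasAntidiagonal

section CountGF

variable {α β σ : Type*}

noncomputable def countGF (w : α → σ →₀ ℕ) (s : Set α) : MvPowerSeries σ ℚ :=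
  fun d => ((s ∩ w ⁻¹' {d}).ncard : ℚ)

variable {w : α → σ →₀ ℕ} {s t : Set α}

theorem coeff_countGF (d : σ →₀ ℕ) : coeff d (countGF w s) = (s ∩ w ⁻¹' {d}).ncard := rfl

theorem countGF_singleton (a : α) : countGF w {a} = monomial (w a) 1 := by
  classical
  ext d
  rw [coeff_countGF, coeff_monomial]
  by_cases h : w a = d
  · simp [h]
  · simp [Ne.symm h, h]

theorem countGF_image {f : β → α} {u : Set β} {w' : β → σ →₀ ℕ} (hf : u.InjOn f)
    (hw : ∀ b ∈ u, w (f b) = w' b) : countGF w (f '' u) = countGF w' u := by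
  ext d
  have hfiber : u ∩ w' ⁻¹' {d} = u ∩ (w ∘ f) ⁻¹' {d} := by
    ext b
    simp +contextual [hw]
  rw [coeff_countGF, coeff_countGF, hfiber, ← (hf.mono Set.inter_subset_left).ncard_image,
    Set.preimage_comp, Set.image_inter_preimage]

theorem countGF_union (hs : ∀ d, (s ∩ w ⁻¹' {d}).Finite) (ht : ∀ d, (t ∩ w ⁻¹' {d}).Finite)
    (hst : Disjoint s t) : countGF w (s ∪ t) = countGF w s + countGF w t := by
  ext d
  rw [map_add, coeff_countGF, coeff_countGF, coeff_countGF, Set.union_inter_distrib_right,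
    Set.ncard_union_eq (hst.mono Set.inter_subset_left Set.inter_subset_left) (hs d) (ht d),
    Nat.cast_add]

theorem countGF_add_const (e : σ →₀ ℕ) :
    countGF (fun a => w a + e) s = monomial e 1 * countGF w s := by
  ext d
  rw [coeff_monomial_mul, coeff_countGF]
  split_ifs with h
  · have hpre : (fun a => w a + e) ⁻¹' {d} = w ⁻¹' {d - e} := by
      ext a
      exact (eq_tsub_iff_add_eq_of_le h).symm
    rw [one_mul, coeff_countGF, hpre]
  · have hpre : (fun a => w a + e) ⁻¹' {d} = ∅ :=
      Set.eq_empty_of_forall_notMem fun a ha => h (ha ▸ le_add_self)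
    rw [hpre, Set.inter_empty, Set.ncard_empty, Nat.cast_zero]

theorem countGF_prod {w' : β → σ →₀ ℕ} {u : Set β} (hs : ∀ d, (s ∩ w ⁻¹' {d}).Finite)
    (hu : ∀ d, (u ∩ w' ⁻¹' {d}).Finite) :
    countGF (fun p => w p.1 + w' p.2) (s ×ˢ u) = countGF w s * countGF w' u := by
  classical
  ext d
  have hfiber : s ×ˢ u ∩ (fun p => w p.1 + w' p.2) ⁻¹' {d} =
      ⋃ e ∈ (antidiagonal d : Set ((σ →₀ ℕ) × (σ →₀ ℕ))),
        (s ∩ w ⁻¹' {e.1}) ×ˢ (u ∩ w' ⁻¹' {e.2}) := by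
    ext p
    simp only [Set.mem_inter_iff, Set.mem_prod, Set.mem_preimage, Set.mem_singleton_iff,
      Set.mem_iUnion, Finset.mem_coe, mem_antidiagonal, exists_prop]
    constructor
    · rintro ⟨⟨hp₁, hp₂⟩, rfl⟩
      exact ⟨(w p.1, w' p.2), rfl, ⟨hp₁, rfl⟩, hp₂, rfl⟩
    · rintro ⟨e, rfl, ⟨hp₁, h₁⟩, hp₂, h₂⟩
      exact ⟨⟨hp₁, hp₂⟩, by rw [h₁, h₂]⟩
  have hdisj : (antidiagonal d : Set ((σ →₀ ℕ) × (σ →₀ ℕ))).PairwiseDisjoint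
      fun e => (s ∩ w ⁻¹' {e.1}) ×ˢ (u ∩ w' ⁻¹' {e.2}) := by
    rintro e - e' - hne
    refine Set.disjoint_left.mpr ?_
    rintro p ⟨⟨-, h₁⟩, -, h₂⟩ ⟨⟨-, h₁'⟩, -, h₂'⟩
    exact hne (Prod.ext (h₁.symm.trans h₁') (h₂.symm.trans h₂'))
  rw [coeff_mul, coeff_countGF, hfiber, (Finset.finite_toSet _).ncard_biUnion
    (fun e _ => (hs e.1).prod (hu e.2)) hdisj, finsum_mem_coe_finset, Nat.cast_sum]
  simp only [Set.ncard_prod, Nat.cast_mul, coeff_countGF]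

end CountGF

theorem List.foldr_max_zero_eq_iff {l : List ℕ} {n : ℕ} (hn : 0 < n) :
    l.foldr max 0 = n ↔ n ∈ l ∧ ∀ x ∈ l, x ≤ n := by
  refine ⟨fun h => ?_, fun ⟨hmem, hle⟩ =>
    le_antisymm (List.max_le_of_forall_le l n hle) (List.le_max_of_le hmem le_rfl)⟩
  have hne : l ≠ [] := by rintro rfl; exact hn.ne' h.symm
  refine ⟨List.maximum_mem ?_, fun x hx => h ▸ List.le_max_of_le hx le_rfl⟩
  rw [← h]
  exact (List.foldr_max_of_ne_nil hne).symm

theorem List.exists_eq_append_cons_of_unimodal {α : Type*} [PartialOrder α] {l₁ l₂ : List α}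
    {n : α} (h₁ : l₁.Pairwise (· ≤ ·)) (h₂ : l₂.Pairwise (· ≥ ·)) (hle : ∀ x ∈ l₁ ++ l₂, x ≤ n)
    (hn : n ∈ l₁ ++ l₂) :
    ∃ A B, l₁ ++ l₂ = A ++ n :: B ∧ n ∉ A ∧ A.Pairwise (· ≤ ·) ∧ B.Pairwise (· ≥ ·) := by
  obtain ⟨A, B, hAB, hnA⟩ := List.eq_append_cons_of_mem hn
  refine ⟨A, B, hAB, hnA, ?_⟩
  rcases List.append_eq_append_iff.mp hAB.symm with ⟨C, rfl, hC⟩ | ⟨C, rfl, rfl⟩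
  · refine ⟨h₁.sublist (List.sublist_append_left _ _), ?_⟩
    cases C with
    | nil =>
      rw [List.nil_append] at hC
      exact (List.pairwise_cons.mp (hC ▸ h₂)).2
    | cons c C =>
      obtain ⟨rfl, rfl⟩ : n = c ∧ B = C ++ l₂ := by simpa using hC
      have hCn : ∀ x ∈ C, x = n := fun x hx =>
        le_antisymm (hle x (by simp [hx])) (List.rel_of_pairwise_cons
          (h₁.sublist (List.sublist_append_right A _)) hx)
      refine List.pairwise_append.mpr ⟨List.pairwise_of_forall_mem_list fun x hx y hy => ?_, h₂,
        fun x hx y hy => (hCn x hx).symm ▸ hle y (by simp [hy])⟩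
      rw [hCn x hx, hCn y hy]
  · obtain rfl : C = [] := List.eq_nil_iff_forall_not_mem.mpr fun c hc =>
      hnA (List.mem_append_right _ ((le_antisymm (hle c (by simp [hc]))
        ((List.pairwise_append.mp h₂).2.2 c hc n List.mem_cons_self)) ▸ hc))
    rw [List.append_nil]
    exact ⟨h₁, (List.pairwise_cons.mp h₂).2⟩

theorem List.append_cons_inj_of_notMem_of_notMem {α : Type*} {a : α} {x₁ x₂ z₁ z₂ : List α}
    (h₁ : a ∉ x₁) (h₂ : a ∉ x₂) (h : x₁ ++ a :: z₁ = x₂ ++ a :: z₂) : x₁ = x₂ ∧ z₁ = z₂ := by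
  classical
  have hlen : x₁.length = x₂.length := by
    simpa [List.idxOf_append_of_notMem h₁, List.idxOf_append_of_notMem h₂] using
      congrArg (List.idxOf a) h
  obtain ⟨hx, hz⟩ := List.append_inj h hlen
  exact ⟨hx, List.cons_injective hz⟩

noncomputable def listWeight (l : List ℕ) : Fin 3 →₀ ℕ :=
  Finsupp.single 0 l.length + Finsupp.single 2 l.sum

theorem listWeight_cons (a : ℕ) (l : List ℕ) :
    listWeight (a :: l) = listWeight l + (Finsupp.single 0 1 + Finsupp.single 2 a) := by
  simp only [listWeight, List.length_cons, List.sum_cons, Finsupp.single_add]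
  abel

theorem finite_inter_preimage_listWeight {s : Set (List ℕ)} (hs : ∀ l ∈ s, ∀ x ∈ l, 0 < x)
    (d : Fin 3 →₀ ℕ) : (s ∩ listWeight ⁻¹' {d}).Finite := by
  refine (Set.finite_range (Composition.blocks (n := d 2))).subset ?_
  rintro l ⟨hl, rfl⟩
  exact ⟨⟨l, hs l hl _, by simp [listWeight]⟩, rfl⟩

theorem listWeight_append (l₁ l₂ : List ℕ) :
    listWeight (l₁ ++ l₂) = listWeight l₁ + listWeight l₂ := by
  simp only [listWeight, List.length_append, List.sum_append, Finsupp.single_add]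
  abel

theorem listWeight_reverse (l : List ℕ) : listWeight l.reverse = listWeight l := by
  simp [listWeight]

def boundedPartitions (k : ℕ) : Set (List ℕ) :=
  {l | l.Pairwise (· ≥ ·) ∧ ∀ x ∈ l, 0 < x ∧ x ≤ k}

theorem finite_boundedPartitions_inter_preimage (k : ℕ) (d : Fin 3 →₀ ℕ) :
    (boundedPartitions k ∩ listWeight ⁻¹' {d}).Finite :=
  finite_inter_preimage_listWeight (fun _ hl x hx => (hl.2 x hx).1) d

theorem boundedPartitions_zero : boundedPartitions 0 = {[]} := by
  ext l
  cases l with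
  | nil => simp [boundedPartitions]
  | cons a l =>
    simp only [boundedPartitions, Set.mem_ofPred_eq, Set.mem_singleton_iff, reduceCtorEq,
      iff_false, not_and]
    exact fun _ h => absurd (h a List.mem_cons_self) (by omega)

theorem boundedPartitions_succ (k : ℕ) :
    boundedPartitions (k + 1) =
      boundedPartitions k ∪ List.cons (k + 1) '' boundedPartitions (k + 1) := by
  ext l
  constructor
  · rintro ⟨hsorted, hparts⟩
    by_cases hk : k + 1 ∈ l
    · cases l with
      | nil => cases hk
      | cons a l =>
        have ha : a = k + 1 := le_antisymm (hparts a List.mem_cons_self).2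
          ((List.mem_cons.mp hk).elim le_of_eq (List.rel_of_pairwise_cons hsorted))
        exact Or.inr ⟨l, ⟨hsorted.of_cons, fun x hx => hparts x (List.mem_cons_of_mem a hx)⟩,
          ha ▸ rfl⟩
    · refine Or.inl ⟨hsorted, fun x hx => ⟨(hparts x hx).1, ?_⟩⟩
      have := (hparts x hx).2
      have : x ≠ k + 1 := fun h => hk (h ▸ hx)
      omega
  · rintro (⟨hsorted, hparts⟩ | ⟨l, ⟨hsorted, hparts⟩, rfl⟩)
    · exact ⟨hsorted, fun x hx => ⟨(hparts x hx).1, (hparts x hx).2.trans k.le_succ⟩⟩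
    · refine ⟨List.pairwise_cons.mpr ⟨fun x hx => (hparts x hx).2, hsorted⟩, fun x hx => ?_⟩
      rcases List.mem_cons.mp hx with rfl | hx
      exacts [⟨k.succ_pos, le_rfl⟩, hparts x hx]

theorem disjoint_boundedPartitions_image_cons (k : ℕ) :
    Disjoint (boundedPartitions k) (List.cons (k + 1) '' boundedPartitions (k + 1)) := by
  refine Set.disjoint_left.mpr ?_
  rintro _ ⟨-, hl⟩ ⟨l, -, rfl⟩
  have := hl (k + 1) List.mem_cons_self
  omega

theorem X_mul_X_pow_eq_monomial (a : ℕ) :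
    (X 0 * X 2 ^ a : MvPowerSeries (Fin 3) ℚ) =
      monomial (Finsupp.single 0 1 + Finsupp.single 2 a) 1 := by
  rw [X_pow_eq, X, monomial_mul_monomial, one_mul]

theorem one_sub_mul_countGF_boundedPartitions_succ (k : ℕ) :
    (1 - X 0 * X 2 ^ (k + 1)) * countGF listWeight (boundedPartitions (k + 1)) =
      countGF listWeight (boundedPartitions k) := by
  have hrec : countGF listWeight (boundedPartitions (k + 1)) =
      countGF listWeight (boundedPartitions k) +
        X 0 * X 2 ^ (k + 1) * countGF listWeight (boundedPartitions (k + 1)) := by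
    conv_lhs => rw [boundedPartitions_succ]
    rw [countGF_union (finite_boundedPartitions_inter_preimage _) (fun d => ?_)
      (disjoint_boundedPartitions_image_cons k),
      countGF_image List.cons_injective.injOn fun l _ => listWeight_cons (k + 1) l,
      X_mul_X_pow_eq_monomial, countGF_add_const]
    refine finite_inter_preimage_listWeight ?_ d
    rintro _ ⟨l, hl, rfl⟩ x hx
    rcases List.mem_cons.mp hx with rfl | hx
    exacts [k.succ_pos, (hl.2 x hx).1]
  linear_combination hrec

theorem prod_mul_countGF_boundedPartitions (k : ℕ) :
    (∏ i ∈ Finset.range k, (1 - X 0 * X 2 ^ (i + 1) : MvPowerSeries (Fin 3) ℚ)) *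
      countGF listWeight (boundedPartitions k) = 1 := by
  induction k with
  | zero =>
    rw [Finset.prod_range_zero, one_mul, boundedPartitions_zero, countGF_singleton]
    simp [listWeight]
  | succ k ih =>
    rw [Finset.prod_range_succ, mul_assoc, one_sub_mul_countGF_boundedPartitions_succ, ih]

noncomputable def stackWeight (l : List ℕ) : Fin 3 →₀ ℕ :=
  listWeight l + Finsupp.single 1 (l.foldr max 0)

theorem stackGF_eq_countGF : stackGF = countGF stackWeight {l | IsStack l} := by
  ext d
  rw [coeff_countGF]
  show (Set.ncard _ : ℚ) = _
  congr 2
  ext l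
  simp [stackWeight, listWeight, Finsupp.ext_iff, Fin.forall_fin_succ]

theorem yslice_countGF {α : Type*} (w : α → Fin 3 →₀ ℕ) (s : Set α) (n : ℕ) :
    yslice n (countGF w s) = countGF w (s ∩ {a | w a 1 = n}) := by
  ext d
  rw [coeff_countGF]
  show ite _ _ _ = _
  split_ifs with h
  · have hfiber : s ∩ {a | w a 1 = n} ∩ w ⁻¹' {d} = s ∩ w ⁻¹' {d} := by
      ext a
      constructor
      · rintro ⟨⟨ha, -⟩, hd⟩
        exact ⟨ha, hd⟩
      · rintro ⟨ha, hd : w a = d⟩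
        exact ⟨⟨ha, show w a 1 = n by rw [hd, h]⟩, hd⟩
    rw [hfiber]
    rfl
  · have hempty : s ∩ {a | w a 1 = n} ∩ w ⁻¹' {d} = ∅ :=
      Set.eq_empty_of_forall_notMem fun a ⟨⟨_, ha⟩, hd⟩ => h (hd ▸ ha)
    rw [hempty, Set.ncard_empty, Nat.cast_zero]

theorem setOf_isStack_foldr_max_eq {n : ℕ} (hn : 0 < n) :
    {l | IsStack l ∧ l.foldr max 0 = n} = (fun p : List ℕ × List ℕ => p.1.reverse ++ n :: p.2) ''
      (boundedPartitions (n - 1) ×ˢ boundedPartitions n) := by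
  ext l
  simp only [Set.mem_ofPred_eq, Set.mem_image, Set.mem_prod, Prod.exists,
    List.foldr_max_zero_eq_iff hn]
  constructor
  · rintro ⟨⟨-, hpos, l₁, l₂, rfl, h₁, h₂⟩, hmem, hle⟩
    obtain ⟨A, B, hAB, hnA, hA, hB⟩ := List.exists_eq_append_cons_of_unimodal h₁ h₂ hle hmem
    rw [hAB] at hpos hle
    refine ⟨A.reverse, B, ⟨⟨List.pairwise_reverse.mpr hA, fun x hx => ?_⟩,
      hB, fun x hx => ?_⟩, by rw [List.reverse_reverse, hAB]⟩
    · have hxA := List.mem_reverse.mp hx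
      have hxn : x ≠ n := fun h => hnA (h ▸ hxA)
      have := hle x (List.mem_append_left _ hxA)
      exact ⟨hpos x (List.mem_append_left _ hxA), by omega⟩
    · have hxl := List.mem_append_right A (List.mem_cons_of_mem n hx)
      exact ⟨hpos x hxl, hle x hxl⟩
  · rintro ⟨A, B, ⟨⟨hA, hAparts⟩, hB, hBparts⟩, rfl⟩
    have hparts : ∀ x ∈ A.reverse ++ n :: B, 0 < x ∧ x ≤ n := by
      intro x hx
      rcases List.mem_append.mp hx with hx | hx
      · have := hAparts x (List.mem_reverse.mp hx)
        omega
      · rcases List.mem_cons.mp hx with rfl | hx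
        exacts [⟨hn, le_rfl⟩, hBparts x hx]
    refine ⟨⟨by simp, fun x hx => (hparts x hx).1, A.reverse ++ [n], B, by simp, ?_, hB⟩,
      by simp, fun x hx => (hparts x hx).2⟩
    refine List.pairwise_append.mpr ⟨List.pairwise_reverse.mpr hA, List.pairwise_singleton _ _,
      fun x hx y hy => ?_⟩
    rw [List.mem_singleton.mp hy]
    exact (hparts x (List.mem_append_left _ hx)).2

theorem yslice_stackGF (n : ℕ) :
    yslice n stackGF = countGF stackWeight {l | IsStack l ∧ l.foldr max 0 = n} := by
  rw [stackGF_eq_countGF, yslice_countGF]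
  congr 1
  ext l
  simp [stackWeight, listWeight]

theorem countGF_setOf_isStack_foldr_max_eq {n : ℕ} (hn : 0 < n) :
    countGF stackWeight {l | IsStack l ∧ l.foldr max 0 = n} =
      X 0 * X 1 ^ n * X 2 ^ n * (countGF listWeight (boundedPartitions (n - 1)) *
        countGF listWeight (boundedPartitions n)) := by
  set f := fun p : List ℕ × List ℕ => p.1.reverse ++ n :: p.2
  have hnotMem : ∀ A ∈ boundedPartitions (n - 1), n ∉ A.reverse := fun A hA hn' => by
    have := (hA.2 n (List.mem_reverse.mp hn')).2
    omega
  have hinj : (boundedPartitions (n - 1) ×ˢ boundedPartitions n).InjOn f := by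
    rintro ⟨A, B⟩ ⟨hA, -⟩ ⟨A', B'⟩ ⟨hA', -⟩ h
    obtain ⟨hAA', rfl⟩ :=
      List.append_cons_inj_of_notMem_of_notMem (hnotMem A hA) (hnotMem A' hA') h
    rw [List.reverse_injective hAA']
  have hweight : ∀ p ∈ boundedPartitions (n - 1) ×ˢ boundedPartitions n, stackWeight (f p) =
      listWeight p.1 + listWeight p.2 +
        (Finsupp.single 0 1 + Finsupp.single 1 n + Finsupp.single 2 n) := by
    intro p hp
    have hmax := ((setOf_isStack_foldr_max_eq hn).symm ▸ Set.mem_image_of_mem f hp).2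
    simp only [stackWeight, f, hmax, listWeight_append, listWeight_reverse, listWeight_cons]
    abel
  rw [setOf_isStack_foldr_max_eq hn, countGF_image hinj hweight, countGF_add_const,
    countGF_prod (finite_boundedPartitions_inter_preimage _)
      (finite_boundedPartitions_inter_preimage _), X_pow_eq, X_pow_eq, X, monomial_mul_monomial,
    monomial_mul_monomial, one_mul, one_mul]

open MvPowerSeries in
/-- `S(x,y,q) = Σ_{n≥1} x yⁿ qⁿ / ((xq)_{n-1}(xq)_n)` where
`(xq)_n = (1-xq)(1-xq²)⋯(1-xqⁿ)`: the part of `S` of `y`-degree `n` (stacks of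
height `n`) equals `x yⁿ qⁿ / ((xq)_{n-1}(xq)_n)`. -/
theorem stack_complete_gf :
    ∀ n : ℕ, 1 ≤ n →
      (∏ i ∈ Finset.range (n - 1), (1 - X 0 * X 2 ^ (i + 1) : MvPowerSeries (Fin 3) ℚ)) *
      (∏ i ∈ Finset.range n, (1 - X 0 * X 2 ^ (i + 1) : MvPowerSeries (Fin 3) ℚ)) *
          yslice n stackGF = X 0 * X 1 ^ n * X 2 ^ n := by
  intro n hn
  rw [yslice_stackGF, countGF_setOf_isStack_foldr_max_eq hn]
  calc _ = X 0 * X 1 ^ n * X 2 ^ n *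
        ((∏ i ∈ Finset.range (n - 1), (1 - X 0 * X 2 ^ (i + 1))) *
          countGF listWeight (boundedPartitions (n - 1))) *
        ((∏ i ∈ Finset.range n, (1 - X 0 * X 2 ^ (i + 1))) *
          countGF listWeight (boundedPartitions n)) := by ring
    _ = _ := by rw [prod_mul_countGF_boundedPartitions, prod_mul_countGF_boundedPartitions,
        mul_one, mul_one]
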